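/- arXiv:0909.4342 — 5 statements merged into one kernel-verified Lean document; each statement's English description precedes it below -/
import Mathlib

section
/- For each path order of a lattice path matroid M, there is exactly one interval presentation of M (i.e., the antichain of intervals presenting M with respect to that linear order is unique). -/
open Matroid Set

namespace Matroid

variable {α : Type*}

/-- Deletion of a set of elements from a matroid. -/
def del (M : Matroid α) (D : Set α) : Matroid α := M ↾ (M.E \ D)

/-- Contraction of a set of elements, defined via duality: `M ／ C = (M✶ ＼ C)✶`. -/
def con (M : Matroid α) (C : Set α) : Matroid α := (M✶.del C)✶

/-- `N` is a minor of `M` if `N` arises from `M` by a contraction followed by a deletion. -/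
def IsMinorOf (N M : Matroid α) : Prop :=
  ∃ C D : Set α, Disjoint C D ∧ N = (M.con C).del D

/-- A circuit is a minimal dependent set. -/
def IsCircuit' (M : Matroid α) (C : Set α) : Prop :=
  M.Dep C ∧ ∀ D, M.Dep D → D ⊆ C → D = C

/-- A spanning circuit is a circuit whose closure is the ground set. -/
def IsSpanningCircuit (M : Matroid α) (C : Set α) : Prop :=
  M.IsCircuit' C ∧ M.Spanning C

/-- Two elements of a matroid are connected if they are equal or lie on a common circuit. -/
def ConnTo (M : Matroid α) (x y : α) : Prop :=
  (x = y ∧ x ∈ M.E) ∨ ∃ C, M.IsCircuit' C ∧ x ∈ C ∧ y ∈ C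

/-- A matroid is connected if its ground set is nonempty and every two elements of the
ground set are connected. -/
def IsConnected (M : Matroid α) : Prop :=
  M.E.Nonempty ∧ ∀ ⦃x y : α⦄, x ∈ M.E → y ∈ M.E → M.ConnTo x y

/-- A loop: an element whose singleton is dependent. -/
def IsLoop' (M : Matroid α) (x : α) : Prop := x ∈ M.E ∧ ¬ M.Indep {x}

/-- The rank of a set `X` in a matroid: the maximum cardinality of an independent
subset of `X` (for finite matroids). -/
noncomputable def rkOf (M : Matroid α) (X : Set α) : ℕ :=
  sSup {k | ∃ I ⊆ X, M.Indep I ∧ I.ncard = k}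

/-- The nullity of a set `X`: `η(X) = |X| − r(X)`. -/
noncomputable def etaOf (M : Matroid α) (X : Set α) : ℕ := X.ncard - M.rkOf X

/-- A flat is connected if the corresponding restriction is a connected matroid. -/
def ConnectedFlat (M : Matroid α) (F : Set α) : Prop :=
  M.IsFlat F ∧ (M ↾ F).IsConnected

/-- A pnc-flat: a proper nontrivial (i.e. dependent) connected flat. -/
def PncFlat (M : Matroid α) (F : Set α) : Prop :=
  M.IsFlat F ∧ F ⊂ M.E ∧ M.Dep F ∧ (M ↾ F).IsConnected

/-- A fundamental flat: a pnc-flat `F` such that `F ∩ C` is a basis of `F`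
for some spanning circuit `C` of the matroid. -/
def FundFlat (M : Matroid α) (F : Set α) : Prop :=
  M.PncFlat F ∧ ∃ C, M.IsSpanningCircuit C ∧ M.IsBasis (F ∩ C) F

end Matroid

/-- `X` is a partial transversal of the family `J`. -/
def IsPartialTransversal {α : Type*} {r : ℕ} (J : Fin r → Set α) (X : Set α) : Prop :=
  ∃ f : α → Fin r, Set.InjOn f X ∧ ∀ x ∈ X, x ∈ J (f x)

/-- The family `J` is a presentation of the transversal matroid `M`: a set `X ⊆ E(M)` is
independent in `M` iff it is a partial transversal of `J`. -/
def IsPresentationOf {α : Type*} {r : ℕ} (J : Fin r → Set α) (M : Matroid α) : Prop :=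
  (∀ i, J i ⊆ M.E) ∧ ∀ X ⊆ M.E, (M.Indep X ↔ IsPartialTransversal J X)

/-- An interval presentation of `M` with respect to a path order: `e` enumerates the ground
set in the path order, and the presentation consists of the intervals `[a i, b i]`, where
the `a i` are strictly increasing, the `b i` are strictly increasing and `a i ≤ b i`. -/
structure IntervalPres {α : Type*} (M : Matroid α) (n r : ℕ) where
  e : Fin n → α
  inj : Function.Injective e
  ground : Set.range e = M.E
  a : Fin r → Fin n
  b : Fin r → Fin n
  ha : StrictMono a
  hb : StrictMono b
  hab : ∀ i, a i ≤ b i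
  pres : IsPresentationOf (fun i => e '' Set.Icc (a i) (b i)) M

/-- The `i`-th interval of an interval presentation. -/
def IntervalPres.J {α : Type*} {M : Matroid α} {n r : ℕ}
    (P : IntervalPres M n r) (i : Fin r) : Set α :=
  P.e '' Set.Icc (P.a i) (P.b i)

/-- A lattice path matroid: a matroid admitting an interval presentation. -/
def IsLPM {α : Type*} (M : Matroid α) : Prop :=
  ∃ n r : ℕ, Nonempty (IntervalPres M n r)

/-- A terminal element: one that is least or greatest in some path order. -/
def IsTerminal {α : Type*} (M : Matroid α) (x : α) : Prop :=
  ∃ (n r : ℕ) (P : IntervalPres M n r) (i : Fin n),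
    P.e i = x ∧ (i.1 = 0 ∨ i.1 = n - 1)

/-- A nested matroid: a lattice path matroid with an interval presentation in which the set
of lower endpoints, or the set of upper endpoints, is an interval in the path order. -/
def IsNested {α : Type*} (M : Matroid α) : Prop :=
  ∃ (n r : ℕ) (P : IntervalPres M n r),
    (Set.range P.a).OrdConnected ∨ (Set.range P.b).OrdConnected

/-- `M` is (isomorphic to) the uniform matroid `U_{r,k}`: `k` elements, and the independent
sets are exactly the subsets of the ground set with at most `r` elements. -/
def IsUniformOf {α : Type*} (M : Matroid α) (r k : ℕ) : Prop :=
  M.E.Finite ∧ M.E.ncard = k ∧ ∀ I ⊆ M.E, (M.Indep I ↔ I.ncard ≤ r)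

/-- `M` is (isomorphic to) an `n`-element circuit `U_{n-1,n}`. -/
def IsCircuitMatroidOf {α : Type*} (M : Matroid α) (n : ℕ) : Prop :=
  IsUniformOf M (n - 1) n

/-- `N` is the truncation of `M` to rank `k`. -/
def IsTruncationOf {α : Type*} (N M : Matroid α) (k : ℕ) : Prop :=
  N.E = M.E ∧ ∀ I, N.Indep I ↔ (M.Indep I ∧ I.ncard ≤ k)

/-- `N` is the direct sum of `M₁` and `M₂`. -/
def IsDirectSumOf {α : Type*} (N M₁ M₂ : Matroid α) : Prop :=
  Disjoint M₁.E M₂.E ∧ N.E = M₁.E ∪ M₂.E ∧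
    ∀ I, N.Indep I ↔ (I ⊆ N.E ∧ M₁.Indep (I ∩ M₁.E) ∧ M₂.Indep (I ∩ M₂.E))

/-- `N` is the parallel connection `P_x(M₁, M₂)`, described by its bases. -/
def IsParallelConnOf {α : Type*} (N M₁ M₂ : Matroid α) (x : α) : Prop :=
  M₁.E ∩ M₂.E = {x} ∧ ¬ (M₁.IsLoop' x ∧ M₂.IsLoop' x) ∧ N.E = M₁.E ∪ M₂.E ∧
    ∀ B, N.IsBase B ↔
      ((x ∈ B ∧ M₁.IsBase (B ∩ M₁.E) ∧ M₂.IsBase (B ∩ M₂.E)) ∨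
       (x ∉ B ∧ ((M₁.IsBase (B ∩ M₁.E) ∧ M₂.IsBase ((B ∩ M₂.E) ∪ {x})) ∨
                 (M₂.IsBase (B ∩ M₂.E) ∧ M₁.IsBase ((B ∩ M₁.E) ∪ {x})))))

/-- `N` is the free extension `M + x` of `M` by the element `x`. -/
def IsFreeExtOf {α : Type*} (N M : Matroid α) (x : α) : Prop :=
  x ∉ M.E ∧ N.E = insert x M.E ∧
    ∀ I, N.Indep I ↔ (I ⊆ N.E ∧ ((x ∉ I ∧ M.Indep I) ∨
        (x ∈ I ∧ M.Indep (I \ {x}) ∧ ¬ M.Spanning (I \ {x}))))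

/-- `M` is (isomorphic to) `P_m`, the truncation to rank `m` of the direct sum of two
`m`-element circuits. -/
def IsPMat {α : Type*} (M : Matroid α) (m : ℕ) : Prop :=
  ∃ U₁ U₂ S : Matroid α, IsCircuitMatroidOf U₁ m ∧ IsCircuitMatroidOf U₂ m ∧
    IsDirectSumOf S U₁ U₂ ∧ IsTruncationOf M S m

/-- `M` is (isomorphic to) `P'_n`, the truncation to rank `n` of the parallel connection,
at a common element, of two `n`-element circuits. -/
def IsP'Mat {α : Type*} (M : Matroid α) (n : ℕ) : Prop :=
  ∃ (U₁ U₂ S : Matroid α) (x : α), IsCircuitMatroidOf U₁ n ∧ IsCircuitMatroidOf U₂ n ∧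
    IsParallelConnOf S U₁ U₂ x ∧ IsTruncationOf M S n

/-- `M` is (isomorphic to) `A_n = P'_n + x`. -/
def IsAMat {α : Type*} (M : Matroid α) (n : ℕ) : Prop :=
  ∃ (N : Matroid α) (x : α), IsP'Mat N n ∧ IsFreeExtOf M N x

/-- `M` is (isomorphic to) `B_{n,k} = T_n(U_{n-1,n} ⊕ U_{n-1,n} ⊕ U_{k-1,k})`. -/
def IsBMat {α : Type*} (M : Matroid α) (n k : ℕ) : Prop :=
  ∃ U₁ U₂ U₃ S₁ S₂ : Matroid α, IsCircuitMatroidOf U₁ n ∧ IsCircuitMatroidOf U₂ n ∧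
    IsUniformOf U₃ (k - 1) k ∧ IsDirectSumOf S₁ U₁ U₂ ∧ IsDirectSumOf S₂ S₁ U₃ ∧
    IsTruncationOf M S₂ n

/-- `M` is (isomorphic to) `C_{n+k,k}`, the dual of `B_{n,k}`. -/
def IsCMat {α : Type*} (M : Matroid α) (n k : ℕ) : Prop := IsBMat M✶ n k

/-- `M` is (isomorphic to) `D_n = (P_{n-1} ⊕ U_{1,1}) + x`. -/
def IsDMat {α : Type*} (M : Matroid α) (n : ℕ) : Prop :=
  ∃ (P U S : Matroid α) (x : α), IsPMat P (n - 1) ∧ IsUniformOf U 1 1 ∧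
    IsDirectSumOf S P U ∧ IsFreeExtOf M S x

/-- `M` is (isomorphic to) `E_n`, the dual of `D_n`. -/
def IsEMat {α : Type*} (M : Matroid α) (n : ℕ) : Prop := IsDMat M✶ n

/-- `M` is (isomorphic to) the rank-3 wheel `W_3`, the cycle matroid of `K₄`: six elements,
rank 3, whose dependent 3-sets are the four triangles of `K₄`. -/
def IsWheel3 {α : Type*} (M : Matroid α) : Prop :=
  ∃ a b c d e f : α, ({a, b, c, d, e, f} : Set α).ncard = 6 ∧
    M.E = {a, b, c, d, e, f} ∧
    ∀ X ⊆ M.E, (M.Indep X ↔ X.ncard ≤ 3 ∧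
      X ≠ {a, b, f} ∧ X ≠ {a, c, e} ∧ X ≠ {b, c, d} ∧ X ≠ {d, e, f})

/-- `M` is (isomorphic to) the rank-3 whirl `W^3`, obtained from `W_3` by relaxing a
circuit-hyperplane: six elements, rank 3, with exactly three dependent 3-sets. -/
def IsWhirl3 {α : Type*} (M : Matroid α) : Prop :=
  ∃ a b c d e f : α, ({a, b, c, d, e, f} : Set α).ncard = 6 ∧
    M.E = {a, b, c, d, e, f} ∧
    ∀ X ⊆ M.E, (M.Indep X ↔ X.ncard ≤ 3 ∧
      X ≠ {a, b, f} ∧ X ≠ {a, c, e} ∧ X ≠ {b, c, d})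

/-- `M` is (isomorphic to) `R_4`: the parallel extension, at `x`, of the rank-4 matroid on
six elements whose ground set is the union of two 4-element circuits `{x,y,p,q}` and
`{x,y,u,v}` meeting in the independent set `{x,y}`, these circuits being its only
nonspanning circuits. -/
def IsR4Mat {α : Type*} (M : Matroid α) : Prop :=
  ∃ (S U : Matroid α) (x x' y p q u v : α),
    ({x, x', y, p, q, u, v} : Set α).ncard = 7 ∧
    S.E = {x, y, p, q, u, v} ∧
    (∀ X ⊆ S.E, (S.Indep X ↔ X.ncard ≤ 4 ∧
        ¬ ({x, y, p, q} : Set α) ⊆ X ∧ ¬ ({x, y, u, v} : Set α) ⊆ X)) ∧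
    U.E = {x, x'} ∧ (∀ B, U.IsBase B ↔ (B = {x} ∨ B = {x'})) ∧
    IsParallelConnOf M S U x

/-- `M` is (isomorphic to) `R_3`, the dual of `R_4`. -/
def IsR3Mat {α : Type*} (M : Matroid α) : Prop := IsR4Mat M✶

/-- `M` is isomorphic to a matroid in the list `E` of excluded minors of `L`. -/
def InExcludedList {α : Type*} (M : Matroid α) : Prop :=
  (∃ n, 3 ≤ n ∧ IsAMat M n) ∨
  (∃ n k, 2 ≤ k ∧ k ≤ n ∧ (IsBMat M n k ∨ IsCMat M n k)) ∨
  (∃ n, 4 ≤ n ∧ (IsDMat M n ∨ IsEMat M n)) ∨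
  IsWheel3 M ∨ IsWhirl3 M ∨ IsR3Mat M ∨ IsR4Mat M

/-- `M` is an excluded minor of the class `L` of lattice path matroids. -/
def IsExcludedMinorOfLPM {α : Type*} (M : Matroid α) : Prop :=
  M.Finite ∧ ¬ IsLPM M ∧ ∀ N : Matroid α, N.IsMinorOf M → N ≠ M → IsLPM N

section Statements

variable {α : Type*}

/-! Since the presentation consists of intervals, the number of lower endpoints `a i` before
position `k` is the largest size of an independent set among the first `k` elements, and the
number of upper endpoints `b i` from position `k` on is the largest size of an independent set
among the remaining ones. These counts depend only on `M` and the order, and a strictly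
increasing sequence is determined by them. -/

theorem Fin.lt_iff_lt_ncard_of_strictMono {β : Type*} [LinearOrder β] {r : ℕ}
    {a : Fin r → β} (ha : StrictMono a) (i : Fin r) (x : β) :
    a i < x ↔ (i : ℕ) < {j | a j < x}.ncard := by
  constructor
  · intro hi
    have hsub : Set.Iic i ⊆ {j | a j < x} := fun j hj => (ha.monotone hj).trans_lt hi
    have hcard : (Set.Iic i).ncard = i + 1 := by simp [Set.ncard_eq_toFinset_card']
    have := Set.ncard_le_ncard hsub
    omega
  · intro hi
    by_contra hx
    have hsub : {j | a j < x} ⊆ Set.Iio i := fun j hj =>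
      ha.lt_iff_lt.mp (lt_of_lt_of_le hj (not_lt.mp hx))
    have hcard : (Set.Iio i).ncard = i := by simp [Set.ncard_eq_toFinset_card']
    have := Set.ncard_le_ncard hsub
    omega

theorem Fin.strictMono_eq_of_ncard_lt_eq {β : Type*} [LinearOrder β] {r : ℕ}
    {a b : Fin r → β} (ha : StrictMono a) (hb : StrictMono b)
    (h : ∀ x, {j | a j < x}.ncard = {j | b j < x}.ncard) : a = b := by
  funext i
  have hab : ∀ x, a i < x ↔ b i < x := fun x => by
    rw [Fin.lt_iff_lt_ncard_of_strictMono ha, Fin.lt_iff_lt_ncard_of_strictMono hb, h]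
  exact le_antisymm (forall_gt_iff_le.mp fun x => (hab x).mpr)
    (forall_gt_iff_le.mp fun x => (hab x).mp)

namespace IsPresentationOf

variable {M : Matroid α} {r : ℕ} {J : Fin r → Set α}

theorem indep_image (hJ : IsPresentationOf J M) {g : Fin r → α} {S : Set (Fin r)}
    (hg : InjOn g S) (hgJ : ∀ i ∈ S, g i ∈ J i) : M.Indep (g '' S) := by
  obtain rfl | ⟨i₀, -⟩ := S.eq_empty_or_nonempty
  · simp
  have : Nonempty (Fin r) := ⟨i₀⟩
  have hground : g '' S ⊆ M.E := by
    rintro _ ⟨i, hi, rfl⟩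
    exact hJ.1 i (hgJ i hi)
  refine (hJ.2 _ hground).mpr ⟨Function.invFunOn g S, Function.invFunOn_injOn_image g S, ?_⟩
  rintro _ ⟨i, hi, rfl⟩
  have hex : ∃ j ∈ S, g j = g i := ⟨i, hi, rfl⟩
  simpa only [Function.invFunOn_eq hex] using hgJ _ (Function.invFunOn_mem hex)

theorem ncard_le_of_indep (hJ : IsPresentationOf J M) {X : Set α} (hX : M.Indep X)
    {T : Set (Fin r)} (hT : ∀ x ∈ X, ∀ i, x ∈ J i → i ∈ T) : X.ncard ≤ T.ncard := by
  obtain ⟨f, hf, hfJ⟩ := (hJ.2 X hX.subset_ground).mp hX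
  calc X.ncard = (f '' X).ncard := hf.ncard_image.symm
    _ ≤ T.ncard := Set.ncard_le_ncard (by rintro _ ⟨x, hx, rfl⟩; exact hT x hx _ (hfJ x hx))

end IsPresentationOf

namespace IntervalPres

variable {M : Matroid α} {n r r' : ℕ}

/-- The representatives `P.e (c i)` with `c i ∈ W` form an independent set, and in any matching
to the intervals of `Q` each of them goes to an interval meeting `W`. -/
theorem ncard_le_ncard_meeting (P : IntervalPres M n r) (Q : IntervalPres M n r')
    (he : P.e = Q.e) {c : Fin r → Fin n} (hc : Function.Injective c)
    (hcP : ∀ i, c i ∈ Icc (P.a i) (P.b i)) (W : Set (Fin n)) :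
    {i | c i ∈ W}.ncard ≤ {j | ∃ m ∈ W, m ∈ Icc (Q.a j) (Q.b j)}.ncard := by
  have hinj : Function.Injective (P.e ∘ c) := P.inj.comp hc
  have hind : M.Indep ((P.e ∘ c) '' {i | c i ∈ W}) :=
    P.pres.indep_image hinj.injOn fun i _ => mem_image_of_mem P.e (hcP i)
  rw [← Set.ncard_image_of_injective _ hinj]
  refine Q.pres.ncard_le_of_indep hind ?_
  rintro _ ⟨i, hi, rfl⟩ j ⟨m, hm, hme⟩
  rw [Function.comp_apply, he] at hme
  exact ⟨m, Q.inj hme ▸ hi, hm⟩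

theorem ncard_a_lt_le (P : IntervalPres M n r) (Q : IntervalPres M n r') (he : P.e = Q.e)
    (k : ℕ) : {i | (P.a i : ℕ) < k}.ncard ≤ {j | (Q.a j : ℕ) < k}.ncard := by
  refine (P.ncard_le_ncard_meeting Q he P.ha.injective (fun i => ⟨le_rfl, P.hab i⟩)
    {m | (m : ℕ) < k}).trans_eq (congrArg Set.ncard (Set.ext fun j => ?_))
  exact ⟨fun ⟨m, hm, hjm, _⟩ => (Fin.le_def.mp hjm).trans_lt hm,
    fun hj => ⟨Q.a j, hj, le_rfl, Q.hab j⟩⟩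

theorem ncard_le_b_le (P : IntervalPres M n r) (Q : IntervalPres M n r') (he : P.e = Q.e)
    (k : ℕ) : {i | k ≤ (P.b i : ℕ)}.ncard ≤ {j | k ≤ (Q.b j : ℕ)}.ncard := by
  refine (P.ncard_le_ncard_meeting Q he P.hb.injective (fun i => ⟨P.hab i, le_rfl⟩)
    {m | k ≤ (m : ℕ)}).trans_eq (congrArg Set.ncard (Set.ext fun j => ?_))
  exact ⟨fun ⟨m, hm, _, hmj⟩ => hm.trans (Fin.le_def.mp hmj),
    fun hj => ⟨Q.b j, hj, Q.hab j, le_rfl⟩⟩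

theorem ncard_a_lt_eq (P : IntervalPres M n r) (Q : IntervalPres M n r') (he : P.e = Q.e)
    (k : ℕ) : {i | (P.a i : ℕ) < k}.ncard = {j | (Q.a j : ℕ) < k}.ncard :=
  le_antisymm (P.ncard_a_lt_le Q he k) (Q.ncard_a_lt_le P he.symm k)

theorem ncard_b_lt_eq (P Q : IntervalPres M n r) (he : P.e = Q.e) (k : ℕ) :
    {i | (P.b i : ℕ) < k}.ncard = {j | (Q.b j : ℕ) < k}.ncard := by
  have hle : {i | k ≤ (P.b i : ℕ)}.ncard = {j | k ≤ (Q.b j : ℕ)}.ncard :=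
    le_antisymm (P.ncard_le_b_le Q he k) (Q.ncard_le_b_le P he.symm k)
  have hcompl : ∀ R : IntervalPres M n r, {j | (R.b j : ℕ) < k} = {j | k ≤ (R.b j : ℕ)}ᶜ :=
    fun R => Set.ext fun j => by simp
  rw [hcompl P, hcompl Q, Set.ncard_compl, Set.ncard_compl, hle]

theorem ncard_a_lt_n (P : IntervalPres M n r) : {i | (P.a i : ℕ) < n}.ncard = r := by
  simp [Set.ncard_univ]

theorem a_eq (P Q : IntervalPres M n r) (he : P.e = Q.e) : P.a = Q.a :=
  Fin.val_injective.comp_left <| Fin.strictMono_eq_of_ncard_lt_eq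
    (Fin.val_strictMono.comp P.ha) (Fin.val_strictMono.comp Q.ha) (P.ncard_a_lt_eq Q he)

theorem b_eq (P Q : IntervalPres M n r) (he : P.e = Q.e) : P.b = Q.b :=
  Fin.val_injective.comp_left <| Fin.strictMono_eq_of_ncard_lt_eq
    (Fin.val_strictMono.comp P.hb) (Fin.val_strictMono.comp Q.hb) (P.ncard_b_lt_eq Q he)

end IntervalPres

theorem uniqueness_of_interval_presentation_general
    (M : Matroid α) (n r₁ r₂ : ℕ)
    (P : IntervalPres M n r₁) (Q : IntervalPres M n r₂) (he : P.e = Q.e) :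
    ∃ h : r₁ = r₂, ∀ i : Fin r₁,
      Q.a (Fin.cast h i) = P.a i ∧ Q.b (Fin.cast h i) = P.b i := by
  have hr : r₁ = r₂ := by
    rw [← P.ncard_a_lt_n, ← Q.ncard_a_lt_n, P.ncard_a_lt_eq Q he]
  subst hr
  exact ⟨rfl, fun i => ⟨congrFun (Q.a_eq P he.symm) i, congrFun (Q.b_eq P he.symm) i⟩⟩

theorem uniqueness_of_interval_presentation
    (M : Matroid α) (hM : IsLPM M) (n r₁ r₂ : ℕ)
    (P : IntervalPres M n r₁) (Q : IntervalPres M n r₂) (he : P.e = Q.e) :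
    ∃ h : r₁ = r₂, ∀ i : Fin r₁,
      Q.a (Fin.cast h i) = P.a i ∧ Q.b (Fin.cast h i) = P.b i :=
  uniqueness_of_interval_presentation_general M n r₁ r₂ P Q he

end Statements
end

section
/- Let F be a flat of a matroid M and let x ∈ E(M) − F. Then the restriction of M/x to F equals the restriction of M to F. Consequently, if in addition F is a connected flat of M and cl_M({x}) = {x}, then cl_{M/x}(F) is a connected flat of M/x. -/
/-!
Since `F` is a flat avoiding `x`, no subset of `F` spans `x`, so contracting `x` does not change
independence inside `F`. For the second part, `cl {x} = {x}` makes `M／x` loopless; then every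
`y ∈ cl_{M／x}(F) \ F` lies on a circuit inside `F ∪ {y}` that meets `F`, and transitivity of
"lying on a common circuit" spreads the connectivity of `F` to its closure.
-/

open Matroid Set

namespace Matroid

variable {α : Type*} {M : Matroid α} {C C₁ C₂ F R : Set α} {x y z : α}

lemma isCircuit'_iff : M.IsCircuit' C ↔ M.IsCircuit C :=
  isCircuit_iff.symm

lemma connTo_iff :
    M.ConnTo x y ↔ (x = y ∧ x ∈ M.E) ∨ ∃ C, M.IsCircuit C ∧ x ∈ C ∧ y ∈ C := by
  simp only [ConnTo, isCircuit'_iff]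

/-- Oxley, Proposition 4.1.2. Eliminating twice, first to bring `z` into a circuit meeting `C₁`
and then to bring `x` back, yields a circuit through `x` meeting `C₂` with fewer elements
outside `C₂`. -/
lemma IsCircuit.exists_isCircuit_mem_mem_of_inter_nonempty [M.Finitary]
    (hC₁ : M.IsCircuit C₁) (hC₂ : M.IsCircuit C₂) (hx : x ∈ C₁) (hz : z ∈ C₂)
    (hC₁C₂ : (C₁ ∩ C₂).Nonempty) : ∃ C, M.IsCircuit C ∧ x ∈ C ∧ z ∈ C := by
  induction hn : (C₁ \ C₂).ncard using Nat.strong_induction_on generalizing C₁ with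
  | _ n ih =>
  by_cases hzC₁ : z ∈ C₁
  · exact ⟨C₁, hC₁, hx, hzC₁⟩
  by_cases hxC₂ : x ∈ C₂
  · exact ⟨C₂, hC₂, hxC₂, hz⟩
  obtain ⟨w, hwC₁, hwC₂⟩ := hC₁C₂
  obtain ⟨C₃, hC₃sub, hC₃, hzC₃⟩ := hC₂.strong_elimination hC₁ hwC₂ hwC₁ hz hzC₁
  by_cases hxC₃ : x ∈ C₃
  · exact ⟨C₃, hC₃, hxC₃, hzC₃⟩
  have hC₃U : C₃ ⊆ C₁ ∪ C₂ := hC₃sub.trans (sdiff_subset.trans (union_comm C₂ C₁).subset)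
  obtain ⟨u, huC₃, huC₂⟩ : ∃ u ∈ C₃, u ∉ C₂ := by
    by_contra! h
    exact (hC₃sub (hC₃.eq_of_subset_isCircuit hC₂ h ▸ hwC₂)).2 rfl
  have huC₁ : u ∈ C₁ := (hC₃U huC₃).resolve_right huC₂
  obtain ⟨C₄, hC₄sub, hC₄, hxC₄⟩ := hC₁.strong_elimination hC₃ huC₁ huC₃ hx hxC₃
  have hC₄U : C₄ ⊆ C₁ ∪ C₂ := hC₄sub.trans (sdiff_subset.trans (union_subset subset_union_left hC₃U))
  have hC₄C₂ : (C₄ ∩ C₂).Nonempty := by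
    by_contra! h
    have hC₄C₁ : C₄ ⊆ C₁ := fun a ha ↦
      (hC₄U ha).resolve_right fun haC₂ ↦ h.subset ⟨ha, haC₂⟩
    exact (hC₄sub (hC₄.eq_of_subset_isCircuit hC₁ hC₄C₁ ▸ huC₁)).2 rfl
  have hlt : C₄ \ C₂ ⊂ C₁ \ C₂ := by
    refine ssubset_of_subset_not_subset (fun a ha ↦ ⟨(hC₄U ha.1).resolve_right ha.2, ha.2⟩)
      fun h ↦ ?_
    exact (hC₄sub (h ⟨huC₁, huC₂⟩).1).2 rfl
  exact ih _ (hn ▸ ncard_lt_ncard hlt (hC₁.finite.sdiff)) hC₄ hxC₄ hC₄C₂ rfl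

lemma ConnTo.symm (h : M.ConnTo x y) : M.ConnTo y x := by
  rcases h with ⟨rfl, hx⟩ | ⟨C, hC, hxC, hyC⟩
  · exact Or.inl ⟨rfl, hx⟩
  · exact Or.inr ⟨C, hC, hyC, hxC⟩

lemma ConnTo.trans [M.Finitary] (hxy : M.ConnTo x y) (hyz : M.ConnTo y z) : M.ConnTo x z := by
  rw [connTo_iff] at *
  rcases hxy with ⟨rfl, -⟩ | ⟨C₁, hC₁, hxC₁, hyC₁⟩
  · exact hyz
  rcases hyz with ⟨rfl, -⟩ | ⟨C₂, hC₂, hyC₂, hzC₂⟩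
  · exact Or.inr ⟨C₁, hC₁, hxC₁, hyC₁⟩
  exact Or.inr (hC₁.exists_isCircuit_mem_mem_of_inter_nonempty hC₂ hxC₁ hzC₂ ⟨y, hyC₁, hyC₂⟩)

lemma ConnTo.of_restrict (h : (M ↾ R).ConnTo x y) (hR : R ⊆ M.E) : M.ConnTo x y := by
  rw [connTo_iff] at h ⊢
  rcases h with ⟨rfl, hx⟩ | ⟨C, hC, hxC, hyC⟩
  · exact Or.inl ⟨rfl, hR hx⟩
  · exact Or.inr ⟨C, ((restrict_isCircuit_iff hR).1 hC).1, hxC, hyC⟩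

/-- In a loopless matroid, the fundamental circuit of `y ∈ cl F \ F` links `y` to `F`. -/
lemma exists_connTo_restrict_closure [M.Loopless] (hFE : F ⊆ M.E) (hy : y ∈ M.closure F) :
    ∃ w ∈ F, (M ↾ M.closure F).ConnTo y w := by
  by_cases hyF : y ∈ F
  · exact ⟨y, hyF, Or.inl ⟨rfl, hy⟩⟩
  obtain ⟨C, hCsub, hC, hyC⟩ := exists_isCircuit_of_mem_closure hy hyF
  obtain ⟨w, hwC, hwy⟩ : ∃ w ∈ C, w ≠ y := by
    by_contra! h
    have hCy : C = {y} := eq_singleton_iff_unique_mem.2 ⟨hyC, h⟩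
    exact (M.isNonloop_of_loopless (hC.subset_ground hyC)).not_isLoop
      (singleton_isCircuit.1 (hCy ▸ hC))
  have hCcl : C ⊆ M.closure F := hCsub.trans (insert_subset hy (M.subset_closure F hFE))
  refine ⟨w, (hCsub hwC).resolve_left hwy, Or.inr ⟨C, ?_, hyC, hwC⟩⟩
  exact isCircuit'_iff.2 ((restrict_isCircuit_iff (M.closure_subset_ground F)).2 ⟨hC, hCcl⟩)

lemma IsConnected.restrict_closure [M.Finitary] [M.Loopless] (hF : (M ↾ F).IsConnected)
    (hFE : F ⊆ M.E) : (M ↾ M.closure F).IsConnected := by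
  have hFcl : F ⊆ M.closure F := M.subset_closure F hFE
  refine ⟨hF.1.mono hFcl, fun y z hy hz ↦ ?_⟩
  obtain ⟨v, hvF, hyv⟩ := exists_connTo_restrict_closure hFE hy
  obtain ⟨w, hwF, hzw⟩ := exists_connTo_restrict_closure hFE hz
  have hvw : (M ↾ M.closure F).ConnTo v w := by
    refine ConnTo.of_restrict ?_ hFcl
    rw [restrict_restrict_eq _ hFcl]
    exact hF.2 hvF hwF
  exact hyv.trans (hvw.trans hzw.symm)

lemma contractElem_restrict_eq_restrict (hx : x ∉ M.closure F) : (M ／ {x}) ↾ F = M ↾ F := by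
  by_cases hxE : x ∈ M.E
  swap
  · rw [contractElem_eq_self hxE]
  have hxnl : M.IsNonloop x :=
    (M.isNonloop_iff x).2 ⟨fun h ↦ hx (M.closure_subset_closure (empty_subset F) h), hxE⟩
  refine ext_indep rfl fun I (hIF : I ⊆ F) ↦ ?_
  simp only [restrict_indep_iff, hxnl.contractElem_indep_iff, hIF, and_true]
  have hxcl : x ∉ M.closure I := fun h ↦ hx (M.closure_subset_closure hIF h)
  have hxI : x ∉ I := fun h ↦ hxcl (M.mem_closure_of_mem' h hxE)
  exact ⟨fun h ↦ h.2.subset (subset_insert x I),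
    fun hI ↦ ⟨hxI, (hI.insert_indep_iff_of_notMem hxI).2 ⟨hxE, hxcl⟩⟩⟩

end Matroid

section Statements

variable {α : Type*}

theorem contract_restrict_flat_eq
    (M : Matroid α) (hfin : M.Finite) (F : Set α) (hF : M.IsFlat F)
    (x : α) (hx : x ∈ M.E \ F) :
    (M.con {x}) ↾ F = M ↾ F ∧
      (M.ConnectedFlat F → M.closure {x} = {x} →
        (M.con {x}).ConnectedFlat ((M.con {x}).closure F)) := by
  have hxF : x ∉ M.closure F := hF.closure.symm ▸ hx.2
  have hrestrict : (M ／ {x}) ↾ F = M ↾ F := contractElem_restrict_eq_restrict hxF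
  refine ⟨hrestrict, fun hconn hclx ↦ ⟨isFlat_closure _, ?_⟩⟩
  have : (M ／ {x}).Loopless := by rw [loopless_iff, contract_loops_eq, hclx, sdiff_self]
  exact (hrestrict ▸ hconn.2).restrict_closure (subset_sdiff_singleton hF.subset_ground hx.2)

end Statements
end

section
/- Let M be a lattice path matroid with a fixed path order and corresponding interval presentation (J_1,…,J_r). If the elements of a basis of M, listed in increasing order with respect to the path order, are x_1 < x_2 < ⋯ < x_r, then x_i ∈ J_i for all i with 1 ≤ i ≤ r. -/
/-! An independent set of size r is matched to the intervals by an injection g : Fin r → Fin r.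
By pigeonhole, the i + 1 smallest elements x_0 ≤ … ≤ x_i cannot all be matched to the i intervals
J_0, …, J_{i-1}, so some x_j with j ≤ i lies in an interval J_{g j} with g j ≥ i; as the left
endpoints increase, a_i ≤ a_{g j} ≤ x_j ≤ x_i. The bound x_i ≤ b_i is the mirror image. -/

open Matroid Set

theorem Fin.exists_le_le_apply_of_injective {r : ℕ} {g : Fin r → Fin r}
    (hg : Function.Injective g) (i : Fin r) : ∃ j ≤ i, i ≤ g j := by
  by_contra! h
  have hcard := Finset.card_le_card_of_injOn g
    (fun j hj => Finset.mem_Iio.2 (h j (Finset.mem_Iic.1 hj))) hg.injOn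
  rw [Fin.card_Iic, Fin.card_Iio] at hcard
  omega

theorem Fin.exists_ge_apply_le_of_injective {r : ℕ} {g : Fin r → Fin r}
    (hg : Function.Injective g) (i : Fin r) : ∃ j, i ≤ j ∧ g j ≤ i := by
  obtain ⟨j, hji, hij⟩ := Fin.exists_le_le_apply_of_injective
    (Fin.rev_injective.comp (hg.comp Fin.rev_injective)) i.rev
  exact ⟨j.rev, Fin.le_rev_iff.1 hji, by simpa using hij⟩

theorem mem_Icc_of_mem_Icc_comp_injective {β : Type*} [Preorder β] {r : ℕ}
    {a b x : Fin r → β} (ha : Monotone a) (hb : Monotone b) (hx : Monotone x)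
    {g : Fin r → Fin r} (hg : Function.Injective g) (hmem : ∀ j, x j ∈ Icc (a (g j)) (b (g j)))
    (i : Fin r) : x i ∈ Icc (a i) (b i) := by
  obtain ⟨j, hji, hij⟩ := Fin.exists_le_le_apply_of_injective hg i
  obtain ⟨k, hik, hki⟩ := Fin.exists_ge_apply_le_of_injective hg i
  exact ⟨(ha hij).trans <| (hmem j).1.trans (hx hji),
    (hx hik).trans <| (hmem k).2.trans (hb hki)⟩

section Statements

variable {α : Type*}

theorem base_mem_intervals
    (M : Matroid α) (n r : ℕ) (P : IntervalPres M n r)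
    (x : Fin r → Fin n) (hx : StrictMono x)
    (hB : M.IsBase (Set.range fun i => P.e (x i))) :
    ∀ i : Fin r, P.e (x i) ∈ P.J i := by
  obtain ⟨f, hf_inj, hf_mem⟩ := (P.pres.2 _ hB.subset_ground).1 hB.indep
  have hg : Function.Injective fun i => f (P.e (x i)) := fun i j h =>
    hx.injective <| P.inj <| hf_inj (mem_range_self i) (mem_range_self j) h
  have hmem (j : Fin r) : x j ∈ Icc (P.a (f (P.e (x j)))) (P.b (f (P.e (x j)))) := by
    obtain ⟨y, hy, hye⟩ := hf_mem _ (mem_range_self j)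
    obtain rfl := P.inj hye
    exact hy
  intro i
  exact mem_image_of_mem P.e <|
    mem_Icc_of_mem_Icc_comp_injective P.ha.monotone P.hb.monotone hx.monotone hg hmem i

end Statements
end

section
/- Let F and G be pnc-flats of a lattice path matroid M with F ∩ G ≠ ∅. If F ∪ G spans M, then F ∪ G = E(M). -/
open Matroid Set

/-!
Fix an interval presentation `J₀, …, J_{r-1}` of `M`. A nontrivial connected flat `F` is
determined by the block `[i, j]` of indices of the intervals it meets: it consists of all
elements whose intervals all have index in `[i, j]`. Indeed, by Hall's theorem (which for
interval families only has to be checked on blocks), a circuit of `F` through the first and the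
last interval met by `F` spans every such element.

If `F ∩ G ≠ ∅` and `F ∪ G` spans, the two blocks overlap and, as the rank is `r`, together
cover `[0, r - 1]`. An element `z ∉ F ∪ G` then meets an interval after the block of `F` and one
before the block of `G`. This puts `z`, in the path order, after an element of `F` and before an
element of `G`, hence on one side of a common element `p ∈ F ∩ G`; blocks are convex in the path
order, so `z ∈ F` or `z ∈ G`.
-/
theorem Finset.exists_injective_of_card_subset_Icc_le {ι : Type*} [Fintype ι]
    (N : ι → Finset ℕ) (hN : ∀ x, (N x : Set ℕ).OrdConnected)
    (hcard : ∀ i j, (Finset.univ.filter fun x => N x ⊆ Finset.Icc i j).card ≤ j + 1 - i) :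
    ∃ f : ι → ℕ, Function.Injective f ∧ ∀ x, f x ∈ N x := by
  classical
  refine (Finset.all_card_le_biUnion_card_iff_exists_injective N).1 fun s => ?_
  induction s using Finset.strongInduction with
  | H s ih =>
  set T := s.biUnion N
  by_cases hgap : ∃ g ∉ T, ∃ a ∈ T, ∃ b ∈ T, a < g ∧ g < b
  · -- every `N x` lies on one side of the gap `g`, so `s` splits into two smaller families
    obtain ⟨g, hgT, a, ha, b, hb, hag, hgb⟩ := hgap
    have hside : ∀ x ∈ s, ∀ k ∈ N x, ∀ k' ∈ N x, k < g → k' < g := by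
      intro x hx k hk k' hk' hkg
      by_contra h
      exact hgT (Finset.mem_biUnion.2 ⟨x, hx, (hN x).out hk hk' ⟨hkg.le, not_lt.1 h⟩⟩)
    set sL := s.filter fun x => ∀ k ∈ N x, k < g
    set sR := s.filter fun x => ¬ ∀ k ∈ N x, k < g
    have hL : sL.biUnion N ⊆ T.filter (· < g) := by
      intro k hk
      obtain ⟨x, hx, hkx⟩ := Finset.mem_biUnion.1 hk
      obtain ⟨hxs, hxg⟩ := Finset.mem_filter.1 hx
      exact Finset.mem_filter.2 ⟨Finset.mem_biUnion.2 ⟨x, hxs, hkx⟩, hxg k hkx⟩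
    have hR : sR.biUnion N ⊆ T.filter (¬ · < g) := by
      intro k hk
      obtain ⟨x, hx, hkx⟩ := Finset.mem_biUnion.1 hk
      obtain ⟨hxs, hxg⟩ := Finset.mem_filter.1 hx
      exact Finset.mem_filter.2 ⟨Finset.mem_biUnion.2 ⟨x, hxs, hkx⟩,
        fun hkg => hxg fun k' hk' => hside x hxs k hkx k' hk' hkg⟩
    have hsL : sL ⊂ s := by
      obtain ⟨x, hxs, hbx⟩ := Finset.mem_biUnion.1 hb
      exact Finset.filter_ssubset.2 ⟨x, hxs, fun h => (h b hbx).not_gt hgb⟩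
    have hsR : sR ⊂ s := by
      obtain ⟨x, hxs, hax⟩ := Finset.mem_biUnion.1 ha
      exact Finset.filter_ssubset.2 ⟨x, hxs, fun h =>
        h fun k hk => hside x hxs a hax k hk hag⟩
    calc s.card = sL.card + sR.card := (Finset.card_filter_add_card_filter_not _).symm
      _ ≤ (T.filter (· < g)).card + (T.filter (¬ · < g)).card :=
          add_le_add ((ih _ hsL).trans (Finset.card_le_card hL))
            ((ih _ hsR).trans (Finset.card_le_card hR))
      _ = T.card := Finset.card_filter_add_card_filter_not _
  · push Not at hgap
    obtain ⟨i, j, hTij, hij⟩ : ∃ i j, T ⊆ Finset.Icc i j ∧ j + 1 - i ≤ T.card := by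
      rcases T.eq_empty_or_nonempty with hT | hT
      · exact ⟨1, 0, by simp [hT], by simp⟩
      refine ⟨T.min' hT, T.max' hT, fun k hk => Finset.mem_Icc.2
        ⟨T.min'_le k hk, T.le_max' k hk⟩, ?_⟩
      have hIcc : Finset.Icc (T.min' hT) (T.max' hT) ⊆ T := by
        intro k hk
        obtain ⟨h1, h2⟩ := Finset.mem_Icc.1 hk
        by_contra hkT
        exact hgap k hkT _ (T.min'_mem hT) _ (T.max'_mem hT)
          (h1.lt_of_ne fun h => hkT (h ▸ T.min'_mem hT))
          |>.not_gt (h2.lt_of_ne fun h => hkT (h ▸ T.max'_mem hT))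
      simpa using Finset.card_le_card hIcc
    calc s.card ≤ (Finset.univ.filter fun x => N x ⊆ Finset.Icc i j).card :=
          Finset.card_le_card fun x hx => Finset.mem_filter.2
            ⟨Finset.mem_univ x, (Finset.subset_biUnion_of_mem N hx).trans hTij⟩
      _ ≤ j + 1 - i := hcard i j
      _ ≤ T.card := hij

theorem Fin.ncard_setOf_le_le {r : ℕ} (i j : ℕ) :
    {k : Fin r | i ≤ k ∧ (k : ℕ) ≤ j}.ncard ≤ min (j + 1) r - i := by
  calc {k : Fin r | i ≤ k ∧ (k : ℕ) ≤ j}.ncard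
      = (Fin.val '' {k : Fin r | i ≤ k ∧ (k : ℕ) ≤ j}).ncard :=
        (ncard_image_of_injective _ Fin.val_injective).symm
    _ ≤ (Finset.Ico i (min (j + 1) r) : Set ℕ).ncard := by
        refine ncard_le_ncard ?_ (Finset.finite_toSet _)
        rintro _ ⟨k, hk, rfl⟩
        simp only [Finset.coe_Ico, mem_Ico, lt_min_iff]
        exact ⟨hk.1, Nat.lt_succ_of_le hk.2, k.2⟩
    _ = min (j + 1) r - i := by rw [ncard_coe_finset, Nat.card_Ico]

namespace Matroid

variable {α : Type*} {M : Matroid α} {C F G : Set α} {x y : α}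

theorem IsCircuit'.isCircuit (hC : M.IsCircuit' C) : M.IsCircuit C :=
  isCircuit_iff.2 ⟨hC.1, fun D => hC.2 D⟩

theorem exists_isCircuit_of_isConnected_restrict (hF : (M ↾ F).IsConnected) (hFE : F ⊆ M.E)
    (hnt : F.Nontrivial) (hx : x ∈ F) (hy : y ∈ F) :
    ∃ C, M.IsCircuit C ∧ C ⊆ F ∧ x ∈ C ∧ y ∈ C := by
  by_cases hxy : x = y
  · obtain ⟨y', hy', hy'x⟩ := hnt.exists_ne x
    rcases hF.2 hx hy' with ⟨rfl, -⟩ | ⟨C, hC, hxC, -⟩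
    · exact absurd rfl hy'x
    obtain ⟨hC, hCF⟩ := (restrict_isCircuit_iff hFE).1 hC.isCircuit
    exact ⟨C, hC, hCF, hxC, hxy ▸ hxC⟩
  rcases hF.2 hx hy with ⟨rfl, -⟩ | ⟨C, hC, hxC, hyC⟩
  · exact absurd rfl hxy
  obtain ⟨hC, hCF⟩ := (restrict_isCircuit_iff hFE).1 hC.isCircuit
  exact ⟨C, hC, hCF, hxC, hyC⟩

theorem PncFlat.not_spanning (hF : M.PncFlat F) : ¬ M.Spanning F := fun h =>
  hF.2.1.ne (hF.1.closure.symm.trans h.closure_eq)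

theorem PncFlat.isNonloop_of_mem (hF : M.PncFlat F) (hnt : F.Nontrivial) (hx : x ∈ F) :
    M.IsNonloop x := by
  obtain ⟨y, hy, hyx⟩ := hnt.exists_ne x
  obtain ⟨C, hC, -, hxC, hyC⟩ :=
    exists_isCircuit_of_isConnected_restrict hF.2.2.2 hF.2.1.subset hnt hx hy
  exact hC.isNonloop_of_mem ⟨x, hxC, y, hyC, hyx.symm⟩ hxC

theorem Dep.nontrivial_of_spanning_union (hF : M.Dep F) (hG : M.IsFlat G)
    (hGs : ¬ M.Spanning G) (hspan : M.Spanning (F ∪ G)) : F.Nontrivial := by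
  by_contra h
  obtain ⟨x, hx⟩ := hF.nonempty
  rw [not_nontrivial_iff.1 h |>.eq_singleton_of_mem hx] at hF hspan
  have hxG : x ∈ G := (singleton_dep.1 hF).mem_of_isFlat hG
  exact hGs (union_eq_right.2 (singleton_subset_iff.2 hxG) ▸ hspan)

end Matroid

namespace IntervalPres

variable {α : Type*} {M : Matroid α} {n r : ℕ} (P : IntervalPres M n r)
  {C F G I X : Set α} {x : α}

/-- Elements lying in no interval at all (the loops) belong to every `P.confined i j`. -/
def confined (i j : ℕ) : Set α :=
  {x | ∀ k : Fin r, x ∈ P.J k → i ≤ k ∧ (k : ℕ) ≤ j}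

theorem ground_finite (P : IntervalPres M n r) : M.E.Finite := P.ground ▸ finite_range _

theorem e_mem_ground (p : Fin n) : P.e p ∈ M.E := P.ground ▸ mem_range_self p

theorem exists_e_eq (hx : x ∈ M.E) : ∃ p, P.e p = x := by
  rwa [← P.ground] at hx

theorem e_mem_J_iff {p : Fin n} {k : Fin r} : P.e p ∈ P.J k ↔ P.a k ≤ p ∧ p ≤ P.b k :=
  P.inj.mem_set_image

theorem indep_iff (hX : X ⊆ M.E) : M.Indep X ↔ IsPartialTransversal P.J X :=
  P.pres.2 X hX

theorem confined_mono {i j i' j' : ℕ} (hi : i' ≤ i) (hj : j ≤ j') :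
    P.confined i j ⊆ P.confined i' j' := fun _ hx k hk =>
  ⟨hi.trans (hx k hk).1, (hx k hk).2.trans hj⟩

theorem exists_mem_J_of_notMem_confined {i j : ℕ} (hx : x ∉ P.confined i j) :
    ∃ k : Fin r, x ∈ P.J k ∧ ¬ (i ≤ k ∧ (k : ℕ) ≤ j) := by
  simpa [confined] using hx

theorem mem_J_of_le_of_le {k k' m : Fin r} (hk : x ∈ P.J k) (hk' : x ∈ P.J k')
    (hkm : k ≤ m) (hmk : m ≤ k') : x ∈ P.J m := by
  obtain ⟨p, hp, rfl⟩ := hk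
  rw [P.e_mem_J_iff] at hk' ⊢
  exact ⟨(P.ha.monotone hmk).trans hk'.1, hp.2.trans (P.hb.monotone hkm)⟩

theorem exists_mem_J_of_isNonloop (hx : M.IsNonloop x) : ∃ k, x ∈ P.J k := by
  obtain ⟨f, -, hf⟩ := (P.indep_iff (singleton_subset_iff.2 hx.mem_ground)).1 hx.indep
  exact ⟨f x, hf x rfl⟩

theorem indep_of_injective (hX : X ⊆ M.E) (g : X → Fin r) (hg : Function.Injective g)
    (hgJ : ∀ x : X, x.1 ∈ P.J (g x)) : M.Indep X := by
  classical
  rcases X.eq_empty_or_nonempty with rfl | ⟨x₀, hx₀⟩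
  · exact M.empty_indep
  refine (P.indep_iff hX).2 ⟨fun y => if h : y ∈ X then g ⟨y, h⟩ else g ⟨x₀, hx₀⟩, ?_, ?_⟩
  · intro u hu v hv huv
    simp only [dif_pos hu, dif_pos hv] at huv
    exact congrArg Subtype.val (hg huv)
  · intro y hy
    simpa only [dif_pos hy] using hgJ ⟨y, hy⟩

theorem image_subset_setOf_le_le {f : α → Fin r} (hf : ∀ x ∈ I, x ∈ P.J (f x)) {i j : ℕ}
    (hI : I ⊆ P.confined i j) : f '' I ⊆ {k : Fin r | i ≤ k ∧ (k : ℕ) ≤ j} := by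
  rintro _ ⟨x, hx, rfl⟩
  exact hI hx _ (hf x hx)

theorem ncard_le_of_indep_of_subset_confined (hI : M.Indep I) {i j : ℕ}
    (hIA : I ⊆ P.confined i j) : I.ncard ≤ j + 1 - i := by
  obtain ⟨f, hinj, hf⟩ := (P.indep_iff hI.subset_ground).1 hI
  calc I.ncard = (f '' I).ncard := hinj.ncard_image.symm
    _ ≤ {k : Fin r | i ≤ k ∧ (k : ℕ) ≤ j}.ncard :=
        ncard_le_ncard (P.image_subset_setOf_le_le hf hIA) (toFinite _)
    _ ≤ j + 1 - i := (Fin.ncard_setOf_le_le i j).trans (by omega)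

theorem forall_exists_mem_J_of_indep (hI : M.Indep I) {i j : ℕ} (hij : i ≤ j)
    (hIA : I ⊆ P.confined i j) (hcard : j + 1 - i ≤ I.ncard) :
    j < r ∧ ∀ k : Fin r, i ≤ k → (k : ℕ) ≤ j → ∃ x ∈ I, x ∈ P.J k := by
  obtain ⟨f, hinj, hf⟩ := (P.indep_iff hI.subset_ground).1 hI
  have hsub := P.image_subset_setOf_le_le hf hIA
  have himage : I.ncard = (f '' I).ncard := hinj.ncard_image.symm
  have hle : (f '' I).ncard ≤ _ := ncard_le_ncard hsub (toFinite _)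
  have hbound := Fin.ncard_setOf_le_le (r := r) i j
  refine ⟨by omega, fun k hik hkj => ?_⟩
  have heq : f '' I = {k : Fin r | i ≤ k ∧ (k : ℕ) ≤ j} :=
    eq_of_subset_of_ncard_le hsub (by omega) (toFinite _)
  obtain ⟨x, hx, rfl⟩ : k ∈ f '' I := heq ▸ ⟨hik, hkj⟩
  exact ⟨x, hx, hf x hx⟩

theorem indep_of_forall_ncard_inter_confined_le (hX : X ⊆ M.E)
    (hbound : ∀ i j, (X ∩ P.confined i j).ncard ≤ j + 1 - i) : M.Indep X := by
  classical
  have : Fintype X := (P.ground_finite.subset hX).fintype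
  let N : X → Finset ℕ := fun x =>
    (Finset.univ.filter fun k : Fin r => x.1 ∈ P.J k).image Fin.val
  have hN : ∀ x m, m ∈ N x ↔ ∃ k : Fin r, x.1 ∈ P.J k ∧ (k : ℕ) = m := by simp [N]
  have hconv : ∀ x, (N x : Set ℕ).OrdConnected := by
    refine fun x => ⟨fun m hm m' hm' w hw => ?_⟩
    obtain ⟨k, hk, rfl⟩ := (hN x m).1 hm
    obtain ⟨k', hk', rfl⟩ := (hN x m').1 hm'
    have hwr : w < r := hw.2.trans_lt k'.2
    exact (hN x w).2 ⟨⟨w, hwr⟩, P.mem_J_of_le_of_le hk hk' hw.1 hw.2, rfl⟩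
  have hcard : ∀ i j, (Finset.univ.filter fun x => N x ⊆ Finset.Icc i j).card ≤ j + 1 - i := by
    intro i j
    set s := Finset.univ.filter fun x => N x ⊆ Finset.Icc i j
    have hs : ((s.map (Function.Embedding.subtype _) : Finset α) : Set α) ⊆
        X ∩ P.confined i j := by
      intro y hy
      obtain ⟨x, hxs, rfl⟩ := Finset.mem_map.1 hy
      refine ⟨x.2, fun k hk => ?_⟩
      simpa using (Finset.mem_filter.1 hxs).2 ((hN x k).2 ⟨k, hk, rfl⟩)
    calc s.card = ((s.map (Function.Embedding.subtype _) : Finset α) : Set α).ncard := by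
          rw [ncard_coe_finset, Finset.card_map]
      _ ≤ (X ∩ P.confined i j).ncard :=
          ncard_le_ncard hs ((P.ground_finite.subset hX).subset inter_subset_left)
      _ ≤ j + 1 - i := hbound i j
  obtain ⟨f, hf, hfN⟩ := Finset.exists_injective_of_card_subset_Icc_le N hconv hcard
  choose g hgJ hgf using fun x => (hN x (f x)).1 (hfN x)
  exact P.indep_of_injective hX g (fun x y h => hf (by rw [← hgf x, ← hgf y, h])) hgJ

theorem exists_confined_of_isCircuit (hC : M.IsCircuit C) :
    ∃ i j, C ⊆ P.confined i j ∧ j + 1 - i < C.ncard := by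
  obtain ⟨i, j, hij⟩ : ∃ i j, j + 1 - i < (C ∩ P.confined i j).ncard := by
    by_contra! h
    exact hC.not_indep (P.indep_of_forall_ncard_inter_confined_le hC.subset_ground h)
  have hCA : C ⊆ P.confined i j := by
    by_contra hCA
    have := P.ncard_le_of_indep_of_subset_confined
      (hC.ssubset_indep (inter_subset_left.ssubset_of_ne fun h => hCA (h ▸ inter_subset_right)))
      inter_subset_right
    omega
  exact ⟨i, j, hCA, (ncard_le_ncard inter_subset_left (P.ground_finite.subset hC.subset_ground)
    |>.trans_lt' hij)⟩

theorem mem_closure_of_isCircuit (hC : M.IsCircuit C) {i j : ℕ} (hCA : C ⊆ P.confined i j)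
    (hlt : j + 1 - i < C.ncard) (hx : x ∈ P.confined i j) (hxE : x ∈ M.E) :
    x ∈ M.closure C := by
  by_cases hxC : x ∈ C
  · exact M.mem_closure_of_mem' hxC hxE
  obtain ⟨c, hc⟩ := hC.nonempty
  have hI := hC.sdiff_singleton_indep hc
  refine M.closure_mono sdiff_subset (hI.mem_closure_iff'.2 ⟨hxE, fun hins => ?_⟩)
  have := P.ncard_le_of_indep_of_subset_confined hins (insert_subset hx (sdiff_subset.trans hCA))
  rw [ncard_insert_of_notMem (fun h => hxC h.1) ((P.ground_finite.subset hC.subset_ground).sdiff),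
    ncard_sdiff_singleton_of_mem hc] at this
  omega

theorem le_ncard_of_isBase (P : IntervalPres M n r) {B : Set α} (hB : M.IsBase B) :
    r ≤ B.ncard := by
  have hI : M.Indep (range (P.e ∘ P.a)) := by
    refine P.indep_of_injective (range_subset_iff.2 fun k => P.e_mem_ground _)
      (rangeSplitting _) (rangeSplitting_injective _) fun x => ?_
    rw [← apply_rangeSplitting (P.e ∘ P.a) x]
    exact P.e_mem_J_iff.2 ⟨le_rfl, P.hab _⟩
  obtain ⟨B', hB', hIB'⟩ := hI.exists_isBase_superset
  calc r = (range (P.e ∘ P.a)).ncard := by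
        rw [ncard_range_of_injective (P.inj.comp P.ha.injective), Nat.card_eq_fintype_card,
          Fintype.card_fin]
    _ ≤ B'.ncard := ncard_le_ncard hIB' (P.ground_finite.subset hB'.subset_ground)
    _ = B.ncard := hB'.ncard_eq_ncard_of_isBase hB

theorem le_of_spanning_subset_confined (hX : M.Spanning X) {i j : ℕ}
    (hXA : X ⊆ P.confined i j) : r ≤ j + 1 - i := by
  obtain ⟨B, hB, hBX⟩ := hX.exists_isBase_subset
  exact (P.le_ncard_of_isBase hB).trans
    (P.ncard_le_of_indep_of_subset_confined hB.indep (hBX.trans hXA))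

def IsBlock (F : Set α) (i j : ℕ) : Prop :=
  j < r ∧ F = P.confined i j ∩ M.E ∧ ∀ k : Fin r, (∃ x ∈ F, x ∈ P.J k) ↔ i ≤ k ∧ (k : ℕ) ≤ j

theorem exists_isBlock (hF : M.PncFlat F) (hnt : F.Nontrivial) :
    ∃ i j, P.IsBlock F i j := by
  classical
  set S := Finset.univ.filter fun k : Fin r => ∃ x ∈ F, x ∈ P.J k
  have hS : ∀ k, k ∈ S ↔ ∃ x ∈ F, x ∈ P.J k := by simp [S]
  have hSne : S.Nonempty := by
    obtain ⟨x, hx⟩ := hnt.nonempty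
    obtain ⟨k, hk⟩ := P.exists_mem_J_of_isNonloop (hF.isNonloop_of_mem hnt hx)
    exact ⟨k, (hS k).2 ⟨x, hx, hk⟩⟩
  obtain ⟨u, huF, huJ⟩ := (hS _).1 (S.min'_mem hSne)
  obtain ⟨v, hvF, hvJ⟩ := (hS _).1 (S.max'_mem hSne)
  obtain ⟨C, hC, hCF, huC, hvC⟩ :=
    exists_isCircuit_of_isConnected_restrict hF.2.2.2 hF.2.1.subset hnt huF hvF
  obtain ⟨i, j, hCA, hlt⟩ := P.exists_confined_of_isCircuit hC
  have hmin := hCA huC _ huJ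
  have hmax := hCA hvC _ hvJ
  obtain ⟨c, hc⟩ := hC.nonempty
  obtain ⟨hjr, honto⟩ := P.forall_exists_mem_J_of_indep (hC.sdiff_singleton_indep hc)
    (hmin.1.trans hmin.2) (sdiff_subset.trans hCA)
    (by rw [ncard_sdiff_singleton_of_mem hc]; omega)
  have hFJ : ∀ k : Fin r, (∃ x ∈ F, x ∈ P.J k) ↔ i ≤ k ∧ (k : ℕ) ≤ j := by
    refine fun k => ⟨fun hk => ?_, fun hk => ?_⟩
    · have h1 := Fin.le_def.1 (S.min'_le k ((hS k).2 hk))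
      have h2 := Fin.le_def.1 (S.le_max' k ((hS k).2 hk))
      exact ⟨hmin.1.trans h1, h2.trans hmax.2⟩
    · obtain ⟨x, hx, hxJ⟩ := honto k hk.1 hk.2
      exact ⟨x, hCF hx.1, hxJ⟩
  refine ⟨i, j, hjr, subset_antisymm
    (fun x hx => ⟨fun k hk => (hFJ k).1 ⟨x, hx, hk⟩, hF.2.1.subset hx⟩) ?_, hFJ⟩
  rintro w ⟨hwA, hwE⟩
  exact hF.1.closure ▸ M.closure_mono hCF (P.mem_closure_of_isCircuit hC hCA hlt hwA hwE)

theorem e_mem_confined_of_le_of_le {i j : ℕ} {px pw py : Fin n} {kx ky : Fin r}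
    (hx : P.e px ∈ P.confined i j) (hy : P.e py ∈ P.confined i j)
    (hxk : P.e px ∈ P.J kx) (hyk : P.e py ∈ P.J ky) (hxw : px ≤ pw) (hwy : pw ≤ py) :
    P.e pw ∈ P.confined i j := by
  intro k hk
  rw [P.e_mem_J_iff] at hk
  constructor
  · by_contra hik
    have hkkx : k ≤ kx := Fin.le_def.2 (by have := (hx kx hxk).1; omega)
    have := (hx k (P.e_mem_J_iff.2
      ⟨(P.ha.monotone hkkx).trans (P.e_mem_J_iff.1 hxk).1, hxw.trans hk.2⟩)).1
    omega
  · by_contra hkj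
    have hkyk : ky ≤ k := Fin.le_def.2 (by have := (hy ky hyk).2; omega)
    have := (hy k (P.e_mem_J_iff.2
      ⟨hk.1.trans hwy, (P.e_mem_J_iff.1 hyk).2.trans (P.hb.monotone hkyk)⟩)).2
    omega

theorem lt_of_notMem_J_right {p q : Fin n} {k k' : Fin r} (hkk' : k < k')
    (hp : P.e p ∈ P.J k) (hp' : P.e p ∉ P.J k') (hq : P.e q ∈ P.J k') : p < q := by
  rw [P.e_mem_J_iff] at hp hp' hq
  have := P.hb hkk'
  exact lt_of_lt_of_le (not_le.1 fun h => hp' ⟨h, hp.2.trans this.le⟩) hq.1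

theorem lt_of_notMem_J_left {p q : Fin n} {k k' : Fin r} (hkk' : k < k')
    (hp : P.e p ∈ P.J k) (hq : P.e q ∈ P.J k') (hq' : P.e q ∉ P.J k) : p < q := by
  rw [P.e_mem_J_iff] at hp hq hq'
  have := P.ha hkk'
  exact lt_of_le_of_lt hp.2 (not_le.1 fun h => hq' ⟨this.le.trans hq.1, h⟩)

theorem union_eq_ground_of_isBlock {iF jF iG jG : ℕ} (hF : P.IsBlock F iF jF)
    (hG : P.IsBlock G iG jG) (hle : iF ≤ iG) (hGF : ¬ G ⊆ F) (hspan : M.Spanning (F ∪ G))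
    {p : α} (hpF : p ∈ F) (hpG : p ∈ G) {kp : Fin r} (hkp : p ∈ P.J kp) : F ∪ G = M.E := by
  obtain ⟨hjF, rfl, hFJ⟩ := hF
  obtain ⟨hjG, rfl, hGJ⟩ := hG
  have hkpF := (hFJ kp).1 ⟨p, hpF, hkp⟩
  have hkpG := (hGJ kp).1 ⟨p, hpG, hkp⟩
  have hjFG : jF < jG := by
    by_contra h
    exact hGF (inter_subset_inter_left _ (P.confined_mono hle (not_lt.1 h)))
  have hr : r ≤ jG + 1 - iF := P.le_of_spanning_subset_confined hspan
    (union_subset (inter_subset_left.trans (P.confined_mono le_rfl hjFG.le))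
      (inter_subset_left.trans (P.confined_mono hle le_rfl)))
  refine subset_antisymm (union_subset inter_subset_right inter_subset_right) fun z hzE => ?_
  by_contra hz
  obtain ⟨hzF, hzG⟩ := not_or.1 hz
  obtain ⟨pz, rfl⟩ := P.exists_e_eq hzE
  obtain ⟨k₁, hzk₁, hk₁⟩ := P.exists_mem_J_of_notMem_confined fun h => hzF ⟨h, hzE⟩
  obtain ⟨k₂, hzk₂, hk₂⟩ := P.exists_mem_J_of_notMem_confined fun h => hzG ⟨h, hzE⟩
  have hk₂₁ : k₂ < k₁ := Fin.lt_def.2 (by omega)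
  obtain ⟨x, hxF, hxk₂⟩ := (hFJ k₂).2 ⟨by omega, by omega⟩
  obtain ⟨y, hyG, hyk₁⟩ := (hGJ k₁).2 ⟨by omega, by omega⟩
  obtain ⟨px, rfl⟩ := P.exists_e_eq hxF.2
  obtain ⟨py, rfl⟩ := P.exists_e_eq hyG.2
  obtain ⟨pp, rfl⟩ := P.exists_e_eq hpF.2
  have hxz : px < pz := P.lt_of_notMem_J_right hk₂₁ hxk₂
    (fun h => by have := hxF.1 k₁ h; omega) hzk₁
  have hzy : pz < py := P.lt_of_notMem_J_left hk₂₁ hzk₂ hyk₁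
    (fun h => by have := hyG.1 k₂ h; omega)
  rcases le_total pz pp with h | h
  · exact hzF ⟨P.e_mem_confined_of_le_of_le hxF.1 hpF.1 hxk₂ hkp hxz.le h, hzE⟩
  · exact hzG ⟨P.e_mem_confined_of_le_of_le hpG.1 hyG.1 hkp hyk₁ h hzy.le, hzE⟩

end IntervalPres

section Statements

variable {α : Type*}

theorem pnc_flats_union_spanning
    (M : Matroid α) (hM : IsLPM M) (F G : Set α)
    (hF : M.PncFlat F) (hG : M.PncFlat G) (hFG : (F ∩ G).Nonempty)
    (hspan : M.Spanning (F ∪ G)) : F ∪ G = M.E := by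
  obtain ⟨n, r, ⟨P⟩⟩ := hM
  obtain ⟨p, hpF, hpG⟩ := hFG
  have hspan' : M.Spanning (G ∪ F) := union_comm F G ▸ hspan
  have hFnt := hF.2.2.1.nontrivial_of_spanning_union hG.1 hG.not_spanning hspan
  have hGnt := hG.2.2.1.nontrivial_of_spanning_union hF.1 hF.not_spanning hspan'
  obtain ⟨iF, jF, hFb⟩ := P.exists_isBlock hF hFnt
  obtain ⟨iG, jG, hGb⟩ := P.exists_isBlock hG hGnt
  obtain ⟨kp, hkp⟩ := P.exists_mem_J_of_isNonloop (hF.isNonloop_of_mem hFnt hpF)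
  rcases le_total iF iG with hle | hle
  · exact P.union_eq_ground_of_isBlock hFb hGb hle
      (fun h => hF.not_spanning (union_eq_left.2 h ▸ hspan)) hspan hpF hpG hkp
  · rw [union_comm]
    exact P.union_eq_ground_of_isBlock hGb hFb hle
      (fun h => hG.not_spanning (union_eq_left.2 h ▸ hspan')) hspan' hpG hpF hkp

end Statements
end

section
/- Let M be a connected lattice path matroid with at least two elements. Fix a path order of M and let (J_1,…,J_r) with J_i = [a_i, b_i] be the corresponding interval presentation. If an element x ∈ E(M) lies in at least two of the sets J_1,…,J_r, or if x ∈ {a_1, b_r}, then x lies in a spanning circuit of M. -/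
open Matroid Set

/-!
With `r + 1` intervals `J₀, …, J_r`, any `r + 2` distinct elements `c₀, …, c_{r+1}` with
`cᵢ, cᵢ₊₁ ∈ Jᵢ` form a spanning circuit: deleting `c_k` leaves a transversal (match `cᵢ` to `Jᵢ`
for `i < k` and to `Jᵢ₋₁` for `i > k`), which is a basis, while `r + 2` elements are dependent.
In a connected lattice path matroid consecutive intervals overlap and `a₀ < b₀`, so
`a₀, b₀, b₁, …, b_r` is such a chain. It contains `a₀` and `b_r`, and an element lying in two
intervals lies in two consecutive ones `J_k, J_{k+1}`, so it can replace `b_k` in the chain.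
-/

open Function

theorem Function.Injective.update_of_notMem_range {ι α : Type*} [DecidableEq ι] {f : ι → α}
    (hf : Injective f) {x : α} (hx : x ∉ Set.range f) (i : ι) : Injective (update f i x) := by
  intro j k hjk
  by_cases hj : j = i <;> by_cases hk : k = i
  · rw [hj, hk]
  · subst hj; simp only [update_self, update_of_ne hk] at hjk; exact absurd ⟨k, hjk.symm⟩ hx
  · subst hk; simp only [update_self, update_of_ne hj] at hjk; exact absurd ⟨j, hjk⟩ hx
  · simp only [update_of_ne hj, update_of_ne hk] at hjk; exact hf hjk

namespace Matroid

variable {α : Type*} {M : Matroid α}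

theorem isCircuit'_iff_isCircuit {C : Set α} : M.IsCircuit' C ↔ M.IsCircuit C := by
  refine and_congr_right fun _ => ⟨fun h D hD hDC => (h D hD hDC).ge, fun h D hD hDC => ?_⟩
  exact hDC.antisymm (h hD hDC)

theorem IsConnected.indep_singleton (hM : M.IsConnected) (h2 : 2 ≤ M.E.ncard) {y : α}
    (hy : y ∈ M.E) : M.Indep {y} := by
  obtain ⟨z, hz, hzy⟩ : ∃ z ∈ M.E, z ≠ y :=
    (Set.one_lt_ncard_iff_nontrivial_and_finite.mp h2).1.exists_ne y
  by_contra hloop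
  rcases hM.2 hz hy with ⟨rfl, -⟩ | ⟨C, hC, hzC, hyC⟩
  · exact hzy rfl
  · have hCy : {y} = C := hC.2 {y} ⟨hloop, by simpa⟩ (by simpa)
    exact hzy (by simpa [← hCy] using hzC)

end Matroid

section Transversal

variable {α : Type*} {r : ℕ} {J : Fin r → Set α} {X Y : Set α}

theorem IsPartialTransversal.finite (hX : IsPartialTransversal J X) : X.Finite := by
  obtain ⟨f, hf, -⟩ := hX
  exact Set.Finite.of_finite_image (Set.toFinite _) hf

theorem IsPartialTransversal.ncard_le (hX : IsPartialTransversal J X) : X.ncard ≤ r := by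
  obtain ⟨f, hf, -⟩ := hX
  simpa using Set.ncard_le_ncard_of_injOn f (fun _ _ => Set.mem_univ _) hf Set.finite_univ

theorem isPartialTransversal_range [NeZero r] {g : Fin r → α} (hg : Injective g)
    (hgJ : ∀ i, g i ∈ J i) : IsPartialTransversal J (Set.range g) := by
  refine ⟨invFun g, ?_, ?_⟩
  · rintro _ ⟨i, rfl⟩ _ ⟨j, rfl⟩ h
    rw [leftInverse_invFun hg i, leftInverse_invFun hg j] at h
    rw [h]
  · rintro _ ⟨i, rfl⟩
    rw [leftInverse_invFun hg i]
    exact hgJ i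

theorem IsPartialTransversal.union (hX : IsPartialTransversal J X)
    (hY : IsPartialTransversal J Y) (S : Set (Fin r)) (hXS : ∀ x ∈ X, ∀ i, x ∈ J i → i ∈ S)
    (hYS : ∀ y ∈ Y, ∀ i, y ∈ J i → i ∉ S) : IsPartialTransversal J (X ∪ Y) := by
  classical
  obtain ⟨f, hf, hfJ⟩ := hX
  obtain ⟨g, hg, hgJ⟩ := hY
  have hdisj : Disjoint X Y := Set.disjoint_left.mpr fun z hzX hzY =>
    hYS z hzY (f z) (hfJ z hzX) (hXS z hzX (f z) (hfJ z hzX))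
  refine ⟨X.piecewise f g, ?_, ?_⟩
  · refine (Set.injOn_union hdisj).mpr ⟨?_, ?_, ?_⟩
    · exact hf.congr fun z hz => (Set.piecewise_eq_of_mem _ _ _ hz).symm
    · exact hg.congr fun z hz =>
        (Set.piecewise_eq_of_notMem _ _ _ (Set.disjoint_right.mp hdisj hz)).symm
    · intro z hz w hw hzw
      rw [Set.piecewise_eq_of_mem _ _ _ hz,
        Set.piecewise_eq_of_notMem _ _ _ (Set.disjoint_right.mp hdisj hw)] at hzw
      exact hYS w hw (g w) (hgJ w hw) (hzw ▸ hXS z hz (f z) (hfJ z hz))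
  · rintro z (hz | hz)
    · rw [Set.piecewise_eq_of_mem _ _ _ hz]; exact hfJ z hz
    · rw [Set.piecewise_eq_of_notMem _ _ _ (Set.disjoint_right.mp hdisj hz)]; exact hgJ z hz

end Transversal

section Presentation

variable {α : Type*} {M : Matroid α} {r : ℕ} {J : Fin r → Set α} {I : Set α}

theorem IsPresentationOf.isPartialTransversal (hJ : IsPresentationOf J M) (hI : M.Indep I) :
    IsPartialTransversal J I :=
  (hJ.2 I hI.subset_ground).mp hI

theorem IsPresentationOf.isBase_of_indep_of_ncard_eq (hJ : IsPresentationOf J M)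
    (hI : M.Indep I) (hIr : I.ncard = r) : M.IsBase I := by
  obtain ⟨B, hB, hIB⟩ := hI.exists_isBase_superset
  have hBfin := (hJ.isPartialTransversal hB.indep).finite
  have hBr := (hJ.isPartialTransversal hB.indep).ncard_le
  rwa [Set.eq_of_subset_of_ncard_le hIB (by omega) hBfin]

theorem IsPresentationOf.exists_mem_of_indep_singleton (hJ : IsPresentationOf J M) {y : α}
    (hy : M.Indep {y}) : ∃ i, y ∈ J i := by
  obtain ⟨f, -, hf⟩ := hJ.isPartialTransversal hy
  exact ⟨f y, hf y rfl⟩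

end Presentation

def IsLinkedChain {α : Type*} {r : ℕ} (J : Fin r → Set α) (c : Fin (r + 1) → α) : Prop :=
  ∀ i, c i.castSucc ∈ J i ∧ c i.succ ∈ J i

section LinkedChain

variable {α : Type*} {M : Matroid α} {r : ℕ} {J : Fin (r + 1) → Set α} {c : Fin (r + 2) → α}

theorem IsLinkedChain.mem_succAbove (hc : IsLinkedChain J c) (k : Fin (r + 2)) (i : Fin (r + 1)) :
    c (k.succAbove i) ∈ J i := by
  rcases Fin.castSucc_lt_or_lt_succ k i with h | h
  · rw [Fin.succAbove_of_castSucc_lt k i h]; exact (hc i).1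
  · rw [Fin.succAbove_of_lt_succ k i h]; exact (hc i).2

theorem IsLinkedChain.range_subset (hJ : IsPresentationOf J M) (hc : IsLinkedChain J c) :
    Set.range c ⊆ M.E := by
  rintro _ ⟨k, rfl⟩
  induction k using Fin.lastCases with
  | last => exact hJ.1 _ (Fin.succ_last r ▸ (hc (Fin.last r)).2)
  | cast i => exact hJ.1 _ (hc i).1

theorem IsLinkedChain.indep_range_sdiff_singleton (hJ : IsPresentationOf J M)
    (hc : IsLinkedChain J c) (hinj : Injective c) (k : Fin (r + 2)) :
    M.Indep (Set.range c \ {c k}) := by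
  have hrange : Set.range c \ {c k} = Set.range (c ∘ k.succAbove) := by
    rw [Set.range_comp, Fin.range_succAbove, Set.image_compl_eq_range_sdiff_image hinj,
      Set.image_singleton]
  rw [hrange]
  refine (hJ.2 _ (hrange ▸ Set.sdiff_subset.trans (hc.range_subset hJ))).mpr ?_
  exact isPartialTransversal_range (hinj.comp Fin.succAbove_right_injective) (hc.mem_succAbove k)

theorem IsLinkedChain.isSpanningCircuit (hJ : IsPresentationOf J M) (hc : IsLinkedChain J c)
    (hinj : Injective c) : M.IsSpanningCircuit (Set.range c) := by
  have hcard : (Set.range c).ncard = r + 2 := by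
    rw [← Set.image_univ, Set.ncard_image_of_injective _ hinj, Set.ncard_univ, Nat.card_fin]
  have hsub := hc.range_subset hJ
  have hdel := hc.indep_range_sdiff_singleton hJ hinj
  have hdep : M.Dep (Set.range c) :=
    ⟨fun hind => by have := (hJ.isPartialTransversal hind).ncard_le; omega, hsub⟩
  refine ⟨isCircuit'_iff_isCircuit.mpr (isCircuit_iff_forall_ssubset.mpr ⟨hdep, ?_⟩), ?_⟩
  · intro D hD
    obtain ⟨_, ⟨k, rfl⟩, hkD⟩ := Set.exists_of_ssubset hD
    exact (hdel k).subset fun z hz => ⟨hD.subset hz, fun hzk => hkD (hzk ▸ hz)⟩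
  · have hbase := hJ.isBase_of_indep_of_ncard_eq (hdel 0) (by
      rw [Set.ncard_sdiff_singleton_of_mem (Set.mem_range_self _), hcard]; rfl)
    exact hbase.spanning.superset Set.sdiff_subset hsub

theorem IsLinkedChain.update (hc : IsLinkedChain J c) {i : Fin r} {x : α}
    (hx : x ∈ J i.castSucc) (hx' : x ∈ J i.succ) :
    IsLinkedChain J (update c i.succ.castSucc x) := by
  intro j
  constructor
  · by_cases hj : j = i.succ
    · subst hj; simpa
    · rw [update_of_ne (fun h => hj (Fin.castSucc_injective _ h))]; exact (hc j).1
  · by_cases hj : j = i.castSucc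
    · subst hj; simpa [← Fin.succ_castSucc]
    · rw [update_of_ne (fun h => hj (Fin.succ_injective _ (Fin.succ_castSucc i ▸ h)))]
      exact (hc j).2

end LinkedChain

namespace IntervalPres

variable {α : Type*} {M : Matroid α} {n r : ℕ}

theorem isPresentationOf (P : IntervalPres M n r) : IsPresentationOf P.J M := P.pres

theorem mem_J_iff (P : IntervalPres M n r) {i : Fin r} {m : Fin n} :
    P.e m ∈ P.J i ↔ P.a i ≤ m ∧ m ≤ P.b i := by
  simp [IntervalPres.J, P.inj.eq_iff]

theorem mem_J_of_le_of_le_s8 (P : IntervalPres M n r) {x : α} {p q k : Fin r}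
    (hp : x ∈ P.J p) (hq : x ∈ P.J q) (hpk : p ≤ k) (hkq : k ≤ q) : x ∈ P.J k := by
  obtain ⟨m, hm, rfl⟩ := hp
  rw [P.mem_J_iff] at hq ⊢
  exact ⟨(P.ha.monotone hkq).trans hq.1, hm.2.trans (P.hb.monotone hpk)⟩

theorem exists_mem_J_castSucc_and_succ (P : IntervalPres M n (r + 1)) {x : α} {i j : Fin (r + 1)}
    (hij : i ≠ j) (hi : x ∈ P.J i) (hj : x ∈ P.J j) :
    ∃ k : Fin r, x ∈ P.J k.castSucc ∧ x ∈ P.J k.succ := by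
  wlog hlt : i < j generalizing i j
  · exact this hij.symm hj hi (hij.symm.lt_of_le (not_lt.mp hlt))
  have hk : i.val < r := by omega
  refine ⟨⟨i, hk⟩, by simpa using hi, P.mem_J_of_le_of_le_s8 hi hj ?_ ?_⟩ <;>
    simp only [Fin.le_def, Fin.val_succ] <;> omega

/-- If `b i < a (i + 1)`, the elements up to `b i` can only be matched to intervals `≤ i` and the
later ones only to intervals `> i`, so no circuit meets both parts. -/
theorem a_succ_le_b_castSucc (P : IntervalPres M n (r + 1)) (hM : M.IsConnected) (i : Fin r) :
    P.a i.succ ≤ P.b i.castSucc := by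
  by_contra! hgap
  set L := P.e '' Set.Iic (P.b i.castSucc)
  obtain ⟨C, hC, hbC, haC⟩ :
      ∃ C, M.IsCircuit' C ∧ P.e (P.b i.castSucc) ∈ C ∧ P.e (P.a i.succ) ∈ C := by
    have hE : ∀ m, P.e m ∈ M.E := fun m => P.ground ▸ Set.mem_range_self m
    rcases hM.2 (hE _) (hE _) with ⟨h, -⟩ | h
    · exact absurd (P.inj h) hgap.ne
    · exact h
  have hC' := isCircuit'_iff_isCircuit.mp hC
  have haL : P.e (P.a i.succ) ∉ L := by
    simpa [L, P.inj.eq_iff] using hgap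
  have hlow := P.isPresentationOf.isPartialTransversal (hC'.ssubset_indep
    (X := C ∩ L) ⟨Set.inter_subset_left, fun h => haL (h haC).2⟩)
  have hhigh := P.isPresentationOf.isPartialTransversal (hC'.ssubset_indep
    (X := C \ L) ⟨Set.sdiff_subset, fun h => (h hbC).2 ⟨_, Set.mem_Iic.mpr le_rfl, rfl⟩⟩)
  refine hC'.dep.not_indep ((P.isPresentationOf.2 C hC'.subset_ground).mpr ?_)
  rw [← Set.inter_union_sdiff C L]
  refine hlow.union hhigh (Set.Iic i.castSucc) ?_ ?_
  · rintro _ ⟨-, m, hm, rfl⟩ k hk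
    rw [P.mem_J_iff] at hk
    have : P.a k < P.a i.succ := hk.1.trans_lt (lt_of_le_of_lt hm hgap)
    simpa [Fin.le_def, Fin.lt_def] using P.ha.lt_iff_lt.mp this
  · rintro z ⟨hzC, hzL⟩ k hk
    obtain ⟨m, rfl⟩ := (P.ground ▸ hC'.subset_ground hzC : z ∈ Set.range P.e)
    rw [P.mem_J_iff] at hk
    have : P.b i.castSucc < P.b k :=
      (not_le.mp fun h => hzL ⟨m, h, rfl⟩).trans_le hk.2
    simpa using P.hb.lt_iff_lt.mp this

theorem a_zero_lt_b_zero (P : IntervalPres M n (r + 1)) (hM : M.IsConnected)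
    (h2 : 2 ≤ M.E.ncard) : P.a 0 < P.b 0 := by
  cases r with
  | succ r => exact (P.ha (Fin.succ_pos 0)).trans_le (P.a_succ_le_b_castSucc hM 0)
  | zero =>
    by_contra! hba
    have hE : M.E ⊆ {P.e (P.a 0)} := by
      intro y hy
      obtain ⟨k, hk⟩ := P.isPresentationOf.exists_mem_of_indep_singleton (hM.indep_singleton h2 hy)
      obtain ⟨m, hm, rfl⟩ := hk
      rw [Fin.fin_one_eq_zero k] at hm
      rw [le_antisymm (hm.2.trans hba) hm.1]; rfl
    have := Set.ncard_le_ncard hE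
    rw [Set.ncard_singleton] at this
    omega

def boundaryChain (P : IntervalPres M n (r + 1)) : Fin (r + 2) → α :=
  Fin.cons (P.e (P.a 0)) fun j => P.e (P.b j)

theorem isLinkedChain_boundaryChain (P : IntervalPres M n (r + 1)) (hM : M.IsConnected) :
    IsLinkedChain P.J P.boundaryChain := by
  intro i
  refine ⟨?_, by simpa [boundaryChain, P.mem_J_iff] using P.hab i⟩
  induction i using Fin.cases with
  | zero => simpa [boundaryChain, P.mem_J_iff] using P.hab 0
  | succ j =>
    rw [← Fin.succ_castSucc]
    simpa [boundaryChain, P.mem_J_iff] using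
      ⟨P.a_succ_le_b_castSucc hM j, P.hb.monotone (Fin.castSucc_le_succ j)⟩

theorem boundaryChain_injective (P : IntervalPres M n (r + 1)) (hM : M.IsConnected)
    (h2 : 2 ≤ M.E.ncard) : Injective P.boundaryChain := by
  refine Fin.cons_injective_iff.mpr ⟨?_, P.inj.comp P.hb.injective⟩
  rintro ⟨j, hj⟩
  exact (P.a_zero_lt_b_zero hM h2).trans_le (P.hb.monotone (Fin.zero_le j)) |>.ne
    (P.inj hj).symm

end IntervalPres

section Statements

variable {α : Type*}

theorem mem_spanning_circuit
    (M : Matroid α) (hM : M.IsConnected) (h2 : 2 ≤ M.E.ncard)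
    (n r : ℕ) (P : IntervalPres M n r) (x : α)
    (hcond : (∃ i j : Fin r, i ≠ j ∧ x ∈ P.J i ∧ x ∈ P.J j) ∨
      (∃ hr : 0 < r, x = P.e (P.a ⟨0, hr⟩) ∨ x = P.e (P.b ⟨r - 1, by omega⟩))) :
    ∃ C, M.IsSpanningCircuit C ∧ x ∈ C := by
  obtain ⟨r, rfl⟩ : ∃ r', r = r' + 1 := Nat.exists_eq_add_one.mpr <| by
    rcases hcond with ⟨i, -⟩ | ⟨hr, -⟩
    exacts [i.pos, hr]
  have hc := P.isLinkedChain_boundaryChain hM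
  have hinj := P.boundaryChain_injective hM h2
  by_cases hxc : x ∈ Set.range P.boundaryChain
  · exact ⟨_, hc.isSpanningCircuit P.isPresentationOf hinj, hxc⟩
  obtain ⟨k, hk, hk'⟩ : ∃ k : Fin r, x ∈ P.J k.castSucc ∧ x ∈ P.J k.succ := by
    rcases hcond with ⟨i, j, hij, hi, hj⟩ | ⟨_, h | h⟩
    · exact P.exists_mem_J_castSucc_and_succ hij hi hj
    · exact (hxc ⟨0, h.symm⟩).elim
    · exact (hxc ⟨Fin.last _, h.symm⟩).elim
  exact ⟨_, (hc.update hk hk').isSpanningCircuit P.isPresentationOf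
    (hinj.update_of_notMem_range hxc _), _, update_self _ _ _⟩

end Statements
end
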